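/- arXiv:2501.02431 — 2 statements merged into one kernel-verified Lean document; each statement's English description precedes it below -/
import Mathlib

section
/- Let σ₀ be a positive C² function on an interval and define φ = (σ₀'/(2σ₀))² + (σ₀'/(2σ₀))'. If 2σ₀'φ + σ₀φ' = 0 on the interval, then the function t ↦ 2σ₀''(t)σ₀(t) - (σ₀'(t))² is constant on the interval. -/
open Set

theorem wronskian_constant_of_phi_equation
    (a b : ℝ) (σ₀ : ℝ → ℝ)
    (hσ : ContDiffOn ℝ 3 σ₀ (Ioo a b))
    (hpos : ∀ t ∈ Ioo a b, 0 < σ₀ t)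
    (φ : ℝ → ℝ)
    (hφ : ∀ t ∈ Ioo a b,
      φ t = (deriv σ₀ t / (2 * σ₀ t)) ^ 2 + deriv (fun s => deriv σ₀ s / (2 * σ₀ s)) t)
    (heq : ∀ t ∈ Ioo a b, 2 * deriv σ₀ t * φ t + σ₀ t * deriv φ t = 0) :
    ∃ k : ℝ, ∀ t ∈ Ioo a b, 2 * deriv (deriv σ₀) t * σ₀ t - (deriv σ₀ t) ^ 2 = k := by
  set I := Ioo a b with hIdef
  have hI : IsOpen I := isOpen_Ioo
  set f1 := deriv σ₀ with hf1def
  set f2 := deriv f1 with hf2def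
  set f3 := deriv f2 with hf3def
  have hd1 : ContDiffOn ℝ 2 f1 I := hσ.deriv_of_isOpen hI (by norm_num)
  have hd2 : ContDiffOn ℝ 1 f2 I := hd1.deriv_of_isOpen hI (by norm_num)
  set W : ℝ → ℝ := fun s => 2 * f2 s * σ₀ s - f1 s ^ 2 with hWdef
  -- derivatives at points of I
  have hσ' : ∀ t ∈ I, HasDerivAt σ₀ (f1 t) t := fun t ht =>
    ((hσ.differentiableOn (by norm_num)).differentiableAt (hI.mem_nhds ht)).hasDerivAt
  have hf1' : ∀ t ∈ I, HasDerivAt f1 (f2 t) t := fun t ht =>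
    ((hd1.differentiableOn (by norm_num)).differentiableAt (hI.mem_nhds ht)).hasDerivAt
  have hf2' : ∀ t ∈ I, HasDerivAt f2 (f3 t) t := fun t ht =>
    ((hd2.differentiableOn (by norm_num)).differentiableAt (hI.mem_nhds ht)).hasDerivAt
  have hW' : ∀ t ∈ I, HasDerivAt W (2 * f3 t * σ₀ t) t := by
    intro t ht
    have h := (((hf2' t ht).const_mul 2).mul (hσ' t ht)).sub ((hf1' t ht).pow 2)
    convert h using 1
    · rfl
    · rfl
    · rfl
    ring
  -- φ = W / (4 σ₀²) on I
  have hφW : ∀ t ∈ I, φ t = W t / (4 * σ₀ t ^ 2) := by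
    intro t ht
    have hne : σ₀ t ≠ 0 := (hpos t ht).ne'
    have hne2 : 2 * σ₀ t ≠ 0 := by positivity
    have hg : HasDerivAt (fun s => f1 s / (2 * σ₀ s))
        ((f2 t * (2 * σ₀ t) - f1 t * (2 * f1 t)) / (2 * σ₀ t) ^ 2) t :=
      (hf1' t ht).div ((hσ' t ht).const_mul 2) hne2
    rw [hφ t ht, hg.deriv, hWdef]
    field_simp
    ring
  -- derivative of φ on I
  have hderivφ : ∀ t ∈ I, deriv φ t =
      (2 * f3 t * σ₀ t * (4 * σ₀ t ^ 2) - W t * (4 * (2 * σ₀ t * f1 t))) / (4 * σ₀ t ^ 2) ^ 2 := by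
    intro t ht
    have hne : 4 * σ₀ t ^ 2 ≠ 0 := by have := hpos t ht; positivity
    have hden : HasDerivAt (fun s => 4 * σ₀ s ^ 2) (4 * (2 * σ₀ t ^ 1 * f1 t)) t :=
      ((hσ' t ht).pow 2).const_mul 4
    have hh : HasDerivAt (fun s => W s / (4 * σ₀ s ^ 2))
        ((2 * f3 t * σ₀ t * (4 * σ₀ t ^ 2) - W t * (4 * (2 * σ₀ t ^ 1 * f1 t))) / (4 * σ₀ t ^ 2) ^ 2)
        t := (hW' t ht).div hden hne
    have hcong : φ =ᶠ[nhds t] fun s => W s / (4 * σ₀ s ^ 2) := by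
      filter_upwards [hI.mem_nhds ht] with s hs using hφW s hs
    rw [Filter.EventuallyEq.deriv_eq hcong, hh.deriv]
    ring_nf
  -- the equation forces deriv W = 0 on I
  have hW0 : ∀ t ∈ I, f3 t = 0 := by
    intro t ht
    have hne : σ₀ t ≠ 0 := (hpos t ht).ne'
    have h := heq t ht
    rw [hφW t ht, hderivφ t ht] at h
    field_simp at h
    have h6 : f3 t * σ₀ t ^ 6 = 0 := by linear_combination h * σ₀ t ^ 4 / 2
    have h7 : σ₀ t ^ 6 ≠ 0 := pow_ne_zero _ hne
    exact (mul_eq_zero.1 h6).resolve_right h7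
  -- W constant on convex I
  have hWdiff : DifferentiableOn ℝ W I := fun t ht =>
    ((hW' t ht).differentiableAt).differentiableWithinAt
  have hWfd : ∀ t ∈ I, fderivWithin ℝ W I t = 0 := by
    intro t ht
    have h0 : HasDerivAt W 0 t := by
      have := hW' t ht
      rwa [hW0 t ht, mul_zero, zero_mul] at this
    rw [(h0.hasFDerivAt.hasFDerivWithinAt (s := I)).fderivWithin (hI.uniqueDiffOn t ht)]
    ext
    simp
  rcases (isEmpty_or_nonempty I).symm.imp id id with h | h
  · obtain ⟨t₀, ht₀⟩ := h
    refine ⟨W t₀, fun t ht => ?_⟩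
    exact (convex_Ioo a b).is_const_of_fderivWithin_eq_zero hWdiff hWfd ht ht₀
  · exact ⟨0, fun t ht => absurd ht (by simpa using h.elim ⟨t, ht⟩)⟩
end

section
/- Let m(t,x,v) = ρ(t,x) exp(−a(t,x)|v − u(t,x)|²) with ρ, a, u differentiable and ρ > 0, a > 0 almost everywhere on (0,T)×Ω, Ω ⊂ ℝ^d open. If m satisfies ∂ₜm + v·∇ₓm = 0 for all (t,x,v) ∈ (0,T)×Ω×ℝ^d, then a does not depend on x: ∇ₓa = 0 on (0,T)×Ω. -/
/-!
Along the velocity `v = r • w`, the transport derivative of the Maxwellian is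
`exp (-a |v - u|²)` times a cubic polynomial in `r` whose leading coefficient is
`-ρ (∇ₓa · w) |w|²`; so `∇ₓa = 0` wherever `ρ ≠ 0`, i.e. almost everywhere.
Along almost every line in the `x`-direction `(0, w)` the derivative of `a` then vanishes
almost everywhere, so `a` is constant along those segments by the fundamental theorem
of calculus; by continuity of `a` this holds along every segment, hence `∇ₓa = 0` everywhere.
-/

open Set Matrix MeasureTheory Filter Topology Function Real

section DotProduct

variable {𝕜 ι : Type*} [NontriviallyNormedField 𝕜] [Fintype ι]

theorem HasDerivAt.dotProduct {f g : 𝕜 → ι → 𝕜} {f' g' : ι → 𝕜} {s : 𝕜}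
    (hf : HasDerivAt f f' s) (hg : HasDerivAt g g' s) :
    HasDerivAt (fun s => f s ⬝ᵥ g s) (f' ⬝ᵥ g s + f s ⬝ᵥ g') s := by
  simp only [_root_.dotProduct, ← Finset.sum_add_distrib]
  exact HasDerivAt.fun_sum fun i _ => (hasDerivAt_pi.1 hf i).mul (hasDerivAt_pi.1 hg i)

theorem DifferentiableAt.dotProduct {E : Type*} [NormedAddCommGroup E] [NormedSpace 𝕜 E]
    {f g : E → ι → 𝕜} {z : E} (hf : DifferentiableAt 𝕜 f z) (hg : DifferentiableAt 𝕜 g z) :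
    DifferentiableAt 𝕜 (fun z => f z ⬝ᵥ g z) z := by
  simp only [_root_.dotProduct]
  exact DifferentiableAt.fun_sum fun i _ =>
    (differentiableAt_pi.1 hf i).mul (differentiableAt_pi.1 hg i)

end DotProduct

theorem HasFDerivAt.deriv_add_fderiv_apply {E F : Type*} [NormedAddCommGroup E] [NormedSpace ℝ E]
    [NormedAddCommGroup F] [NormedSpace ℝ F] {f : ℝ × E → F} {f' : ℝ × E →L[ℝ] F} {t : ℝ} {x : E}
    (hf : HasFDerivAt f f' (t, x)) (v : E) :
    deriv (fun s => f (s, x)) t + fderiv ℝ (fun y => f (t, y)) x v = f' (1, v) := by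
  have ht : HasDerivAt (fun s => f (s, x)) (f' (1, 0)) t :=
    hf.comp_hasDerivAt t ((hasDerivAt_id t).prodMk (hasDerivAt_const t x))
  have hx : HasFDerivAt (fun y => f (t, y)) (f'.comp (.inr ℝ ℝ E)) x :=
    hf.comp x (hasFDerivAt_prodMk_right t x)
  rw [ht.deriv, hx.fderiv]
  simp [← map_add]

theorem ContinuousLinearMap.map_prodMk_smul {R M N F : Type*} [Semiring R] [AddCommMonoid M]
    [AddCommMonoid N] [Module R M] [Module R N] [TopologicalSpace M] [TopologicalSpace N]
    [AddCommMonoid F] [Module R F] [TopologicalSpace F] (L : M × N →L[R] F) (m : M) (r : R)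
    (n : N) : L (m, r • n) = L (m, 0) + r • L (0, n) := by
  rw [← map_smul, ← map_add]
  simp

section Maxwellian

variable {ι : Type*} [Fintype ι]

noncomputable def maxwellian (ρ a : ℝ → (ι → ℝ) → ℝ) (u : ℝ → (ι → ℝ) → ι → ℝ) (t : ℝ)
    (x v : ι → ℝ) : ℝ :=
  ρ t x * exp (-(a t x) * ((v - u t x) ⬝ᵥ (v - u t x)))

variable {ρ a : ℝ → (ι → ℝ) → ℝ} {u : ℝ → (ι → ℝ) → ι → ℝ} {t : ℝ} {x : ι → ℝ}

theorem maxwellian_transport_eq (hρ : DifferentiableAt ℝ (uncurry ρ) (t, x))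
    (ha : DifferentiableAt ℝ (uncurry a) (t, x)) (hu : DifferentiableAt ℝ (uncurry u) (t, x))
    (v : ι → ℝ) :
    deriv (fun s => maxwellian ρ a u s x v) t + fderiv ℝ (fun y => maxwellian ρ a u t y v) x v
      = exp (-(a t x) * ((v - u t x) ⬝ᵥ (v - u t x))) *
        (fderiv ℝ (uncurry ρ) (t, x) (1, v) - ρ t x *
          (fderiv ℝ (uncurry a) (t, x) (1, v) * ((v - u t x) ⬝ᵥ (v - u t x))
            - 2 * a t x * ((v - u t x) ⬝ᵥ fderiv ℝ (uncurry u) (t, x) (1, v)))) := by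
  have hM : DifferentiableAt ℝ (fun p : ℝ × (ι → ℝ) => maxwellian ρ a u p.1 p.2 v) (t, x) :=
    hρ.mul ((ha.neg.mul ((hu.const_sub v).dotProduct (hu.const_sub v))).exp)
  rw [hM.hasFDerivAt.deriv_add_fderiv_apply, ← hM.lineDeriv_eq_fderiv, lineDeriv]
  have hline : HasDerivAt (fun s : ℝ => (t, x) + s • ((1 : ℝ), v)) (1, v) 0 := by
    simpa using ((hasDerivAt_id (0 : ℝ)).smul_const ((1 : ℝ), v)).const_add (t, x)
  have h0 : (t, x) = (t, x) + (0 : ℝ) • ((1 : ℝ), v) := by simp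
  have hR := hρ.hasFDerivAt.comp_hasDerivAt_of_eq 0 hline h0
  have hA := ha.hasFDerivAt.comp_hasDerivAt_of_eq 0 hline h0
  have hU := (hu.hasFDerivAt.comp_hasDerivAt_of_eq 0 hline h0).const_sub v
  have hM' : HasDerivAt (fun s : ℝ => maxwellian ρ a u ((t, x) + s • ((1 : ℝ), v)).1
      ((t, x) + s • ((1 : ℝ), v)).2 v) _ 0 := hR.mul ((hA.neg.mul (hU.dotProduct hU)).exp)
  rw [hM'.deriv]
  simp only [Function.comp_apply, Pi.mul_apply, Pi.neg_apply, ← h0, uncurry_apply_pair,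
    dotProduct_neg, dotProduct_comm]
  ring

theorem fderiv_uncurry_apply_zero_eq_zero_of_transport
    (hρ : DifferentiableAt ℝ (uncurry ρ) (t, x))
    (ha : DifferentiableAt ℝ (uncurry a) (t, x)) (hu : DifferentiableAt ℝ (uncurry u) (t, x))
    (hρ₀ : ρ t x ≠ 0)
    (htransport : ∀ v, deriv (fun s => maxwellian ρ a u s x v) t
      + fderiv ℝ (fun y => maxwellian ρ a u t y v) x v = 0) (w : ι → ℝ) :
    fderiv ℝ (uncurry a) (t, x) (0, w) = 0 := by
  rcases eq_or_ne w 0 with rfl | hw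
  · exact map_zero _
  have hpoly : ∀ r : ℝ, fderiv ℝ (uncurry ρ) (t, x) (1, r • w) - ρ t x *
      (fderiv ℝ (uncurry a) (t, x) (1, r • w) * ((r • w - u t x) ⬝ᵥ (r • w - u t x))
        - 2 * a t x * ((r • w - u t x) ⬝ᵥ fderiv ℝ (uncurry u) (t, x) (1, r • w))) = 0 := by
    intro r
    have h := htransport (r • w)
    rw [maxwellian_transport_eq hρ ha hu] at h
    exact (mul_eq_zero.1 h).resolve_left (exp_ne_zero _)
  simp only [ContinuousLinearMap.map_prodMk_smul, sub_dotProduct, dotProduct_sub, smul_dotProduct,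
    dotProduct_smul, dotProduct_add, smul_eq_mul] at hpoly
  have hcubic : ρ t x * fderiv ℝ (uncurry a) (t, x) (0, w) * (w ⬝ᵥ w) = 0 := by
    -- the third finite difference of a cubic is `6` times its leading coefficient
    linear_combination (hpoly (-1) - 3 * hpoly 0 + 3 * hpoly 1 - hpoly 2) / 6
  simpa [hρ₀, dotProduct_self_eq_zero, hw] using hcubic

end Maxwellian

theorem eq_of_hasDerivAt_of_ae_eq_zero {F : Type*} [NormedAddCommGroup F] [NormedSpace ℝ F]
    [CompleteSpace F] {g g' : ℝ → F} {a b : ℝ} (hg : ∀ s ∈ uIcc a b, HasDerivAt g (g' s) s)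
    (hg' : ∀ᵐ s, s ∈ uIoc a b → g' s = 0) : g b = g a := by
  have hint : IntervalIntegrable g' volume a b :=
    (intervalIntegrable_const (c := (0 : F))).congr_ae
      (((ae_restrict_iff' measurableSet_uIoc).2 hg').mono fun _ hs => hs.symm)
  rw [← sub_eq_zero, ← intervalIntegral.integral_eq_sub_of_hasDerivAt hg hint,
    intervalIntegral.integral_congr_ae (g := fun _ => 0) hg']
  simp

section Haar

variable {V : Type*} [NormedAddCommGroup V] [NormedSpace ℝ V] [FiniteDimensional ℝ V]
  [MeasurableSpace V] [BorelSpace V] {μ : Measure V} [μ.IsAddHaarMeasure]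

theorem ae_ae_add_smul {P : V → Prop} (h : ∀ᵐ p ∂μ, P p) (e : V) :
    ∀ᵐ q ∂μ, ∀ᵐ s : ℝ, P (q + s • e) := by
  have hN : ∀ᵐ q ∂μ, q ∈ (toMeasurable μ {p | ¬P p})ᶜ := by
    rw [ae_iff]; simpa [measure_toMeasurable] using ae_iff.1 h
  filter_upwards [(ae_ae_add_linearMap_mem_iff (LinearMap.toSpanSingleton ℝ V e) volume μ
    (measurableSet_toMeasurable _ _).compl).2 hN] with q hq
  filter_upwards [hq] with s hs
  by_contra hbad
  exact hs (subset_toMeasurable _ _ hbad)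

theorem eventually_add_smul_eq_of_ae {F : Type*} [NormedAddCommGroup F] [NormedSpace ℝ F]
    [CompleteSpace F] {f : V → F} {D : Set V} {e : V} (hD : IsOpen D)
    (hf : ∀ p ∈ D, DifferentiableAt ℝ f p) (h : ∀ᵐ p ∂μ, p ∈ D → fderiv ℝ f p e = 0)
    {p : V} (hp : p ∈ D) : ∀ᶠ τ in 𝓝 (0 : ℝ), f (p + τ • e) = f p := by
  obtain ⟨r, hr, hball⟩ := Metric.isOpen_iff.1 hD p hp
  have hseg : ∀ q ∈ Metric.ball p (r / 2), ∀ τ : ℝ, ‖τ • e‖ < r / 2 → ∀ s ∈ uIcc 0 τ,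
      q + s • e ∈ D := by
    intro q hq τ hτ s hs
    apply hball
    have hs' : ‖s • e‖ ≤ ‖τ • e‖ := by
      simp only [norm_smul]
      gcongr
      simpa using abs_sub_left_of_mem_uIcc hs
    calc dist (q + s • e) p ≤ dist (q + s • e) q + dist q p := dist_triangle ..
      _ = ‖s • e‖ + dist q p := by rw [dist_self_add_left]
      _ < r / 2 + r / 2 := add_lt_add (hs'.trans_lt hτ) (Metric.mem_ball.1 hq)
      _ = r := add_halves r
  have hsmall : Tendsto (fun τ : ℝ => τ • e) (𝓝 0) (𝓝 0) := by
    simpa using (tendsto_id (x := 𝓝 (0 : ℝ))).smul_const e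
  filter_upwards [hsmall (Metric.ball_mem_nhds 0 (half_pos hr))] with τ hτ
  replace hτ : ‖τ • e‖ < r / 2 := mem_ball_zero_iff.1 hτ
  have hderiv : ∀ q ∈ Metric.ball p (r / 2), ∀ s ∈ uIcc 0 τ,
      HasDerivAt (fun σ : ℝ => f (q + σ • e)) (fderiv ℝ f (q + s • e) e) s := fun q hq s hs =>
    (hf _ (hseg q hq τ hτ s hs)).hasFDerivAt.comp_hasDerivAt s
      (((hasDerivAt_id s).smul_const e).const_add q |>.congr_deriv (one_smul ℝ e))
  have hae : (fun q => f (q + τ • e)) =ᵐ[μ.restrict (Metric.ball p (r / 2))] f := by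
    rw [EventuallyEq, ae_restrict_iff' measurableSet_ball]
    filter_upwards [ae_ae_add_smul h e] with q hq hqU
    simpa using eq_of_hasDerivAt_of_ae_eq_zero (hderiv q hqU) <|
      hq.mono fun s hs hsI => hs (hseg q hqU τ hτ s (uIoc_subset_uIcc hsI))
  have hcont : ∀ σ ∈ uIcc 0 τ, ContinuousOn (fun q => f (q + σ • e)) (Metric.ball p (r / 2)) :=
    fun σ hσ q hq => ((hf _ (hseg q hq τ hτ σ hσ)).continuousAt.comp (f := (· + σ • e))
      (continuous_add_const (σ • e)).continuousAt).continuousWithinAt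
  exact Measure.eqOn_open_of_ae_eq hae Metric.isOpen_ball (hcont τ right_mem_uIcc)
    (by simpa using hcont 0 left_mem_uIcc) (Metric.mem_ball_self (half_pos hr))

theorem fderiv_apply_eq_zero_of_ae {F : Type*} [NormedAddCommGroup F] [NormedSpace ℝ F]
    [CompleteSpace F] {f : V → F} {D : Set V} {e : V} (hD : IsOpen D)
    (hf : ∀ p ∈ D, DifferentiableAt ℝ f p) (h : ∀ᵐ p ∂μ, p ∈ D → fderiv ℝ f p e = 0)
    {p : V} (hp : p ∈ D) : fderiv ℝ f p e = 0 := by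
  have hline : HasDerivAt (fun τ : ℝ => f (p + τ • e)) (fderiv ℝ f p e) 0 :=
    (hf p hp).hasFDerivAt.comp_hasDerivAt_of_eq 0
      (((hasDerivAt_id 0).smul_const e).const_add p |>.congr_deriv (one_smul ℝ e)) (by simp)
  exact hline.unique <| (hasDerivAt_const 0 (f p)).congr_of_eventuallyEq <|
    eventually_add_smul_eq_of_ae hD hf h hp

end Haar

theorem maxwellian_transport_implies_a_independent_of_x_general
    (d : ℕ) (T : ℝ)
    (Ω : Set (Fin d → ℝ)) (hΩ : IsOpen Ω)
    (ρ a : ℝ → (Fin d → ℝ) → ℝ) (u : ℝ → (Fin d → ℝ) → (Fin d → ℝ))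
    (hρ : ∀ t ∈ Ioo 0 T, ∀ x ∈ Ω,
      DifferentiableAt ℝ (fun p : ℝ × (Fin d → ℝ) => ρ p.1 p.2) (t, x))
    (ha : ∀ t ∈ Ioo 0 T, ∀ x ∈ Ω,
      DifferentiableAt ℝ (fun p : ℝ × (Fin d → ℝ) => a p.1 p.2) (t, x))
    (hu : ∀ t ∈ Ioo 0 T, ∀ x ∈ Ω,
      DifferentiableAt ℝ (fun p : ℝ × (Fin d → ℝ) => u p.1 p.2) (t, x))
    (hpos : ∀ᵐ p ∂(volume.restrict ((Ioo (0:ℝ) T) ×ˢ Ω) :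
        Measure (ℝ × (Fin d → ℝ))), 0 < ρ p.1 p.2 ∧ 0 < a p.1 p.2)
    (m : ℝ → (Fin d → ℝ) → (Fin d → ℝ) → ℝ)
    (hm : ∀ t x v, m t x v
      = ρ t x * Real.exp (-(a t x) * ((v - u t x) ⬝ᵥ (v - u t x))))
    (htransport : ∀ t ∈ Ioo 0 T, ∀ x ∈ Ω, ∀ v : Fin d → ℝ,
      deriv (fun s => m s x v) t + fderiv ℝ (fun y => m t y v) x v = 0) :
    ∀ t ∈ Ioo 0 T, ∀ x ∈ Ω, fderiv ℝ (fun y => a t y) x = 0 := by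
  have : (volume : Measure (ℝ × (Fin d → ℝ))).IsAddHaarMeasure := by
    rw [Measure.volume_eq_prod]; infer_instance
  obtain rfl : m = maxwellian ρ a u := funext₃ hm
  have hD : IsOpen (Ioo 0 T ×ˢ Ω) := isOpen_Ioo.prod hΩ
  have hgrad : ∀ w, ∀ᵐ p ∂volume, p ∈ Ioo 0 T ×ˢ Ω →
      fderiv ℝ (uncurry a) p (0, w) = 0 := by
    intro w
    filter_upwards [(ae_restrict_iff' hD.measurableSet).1 hpos] with p hp hpD
    exact fderiv_uncurry_apply_zero_eq_zero_of_transport (hρ _ hpD.1 _ hpD.2)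
      (ha _ hpD.1 _ hpD.2) (hu _ hpD.1 _ hpD.2) (hp hpD).1.ne' (htransport _ hpD.1 _ hpD.2) w
  intro t ht x hx
  have hslice : HasFDerivAt (fun y => a t y)
      ((fderiv ℝ (uncurry a) (t, x)).comp (.inr ℝ ℝ (Fin d → ℝ))) x :=
    (ha t ht x hx).hasFDerivAt.comp x (hasFDerivAt_prodMk_right t x)
  ext w
  rw [hslice.fderiv]
  exact fderiv_apply_eq_zero_of_ae hD (fun p hp => ha _ hp.1 _ hp.2) (hgrad w) ⟨ht, hx⟩

theorem maxwellian_transport_implies_a_independent_of_x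
    (d : ℕ) (T : ℝ) (hT : 0 < T)
    (Ω : Set (Fin d → ℝ)) (hΩ : IsOpen Ω) (hconn : IsConnected Ω)
    (ρ a : ℝ → (Fin d → ℝ) → ℝ) (u : ℝ → (Fin d → ℝ) → (Fin d → ℝ))
    (hρ : ∀ t ∈ Ioo 0 T, ∀ x ∈ Ω,
      DifferentiableAt ℝ (fun p : ℝ × (Fin d → ℝ) => ρ p.1 p.2) (t, x))
    (ha : ∀ t ∈ Ioo 0 T, ∀ x ∈ Ω,
      DifferentiableAt ℝ (fun p : ℝ × (Fin d → ℝ) => a p.1 p.2) (t, x))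
    (hu : ∀ t ∈ Ioo 0 T, ∀ x ∈ Ω,
      DifferentiableAt ℝ (fun p : ℝ × (Fin d → ℝ) => u p.1 p.2) (t, x))
    (hpos : ∀ᵐ p ∂(volume.restrict ((Ioo (0:ℝ) T) ×ˢ Ω) :
        Measure (ℝ × (Fin d → ℝ))), 0 < ρ p.1 p.2 ∧ 0 < a p.1 p.2)
    (m : ℝ → (Fin d → ℝ) → (Fin d → ℝ) → ℝ)
    (hm : ∀ t x v, m t x v
      = ρ t x * Real.exp (-(a t x) * ((v - u t x) ⬝ᵥ (v - u t x))))
    (htransport : ∀ t ∈ Ioo 0 T, ∀ x ∈ Ω, ∀ v : Fin d → ℝ,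
      deriv (fun s => m s x v) t + fderiv ℝ (fun y => m t y v) x v = 0) :
    ∀ t ∈ Ioo 0 T, ∀ x ∈ Ω, fderiv ℝ (fun y => a t y) x = 0 :=
  maxwellian_transport_implies_a_independent_of_x_general d T Ω hΩ ρ a u hρ ha hu hpos m hm
    htransport
end
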